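/- Let X be a metric space, (γᵢ : [0,aᵢ) → X) a sequence of 1-Lipschitz curves with γᵢ(0) → x ∈ X, and suppose there is a compact set B ⊆ X and N ∈ ℕ such that the image of γᵢ lies in B for all i ≥ N. Set a = limsupᵢ aᵢ and assume 0 < a < ∞. Then there is a continuous curve γ : [0,a) → B with γ(0) = x and a subsequence (γ_{i_k}) with lim_k a_{i_k} = a such that the reparametrised curves t ↦ γ_{i_k}((a_{i_k}/a)·t) converge uniformly on compact subsets of [0,a) to γ. -/
import Mathlib


/-- Limit curve theorem in a compact region with varying domains: 1-Lipschitz curves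
`γᵢ : [0,aᵢ) → X` with `γᵢ(0) → x`, images eventually inside a compact `B`, and
`a = limsup aᵢ ∈ (0,∞)` admit a subsequence with `a_{i_k} → a` whose linear
reparametrisations `t ↦ γ_{i_k}((a_{i_k}/a)t)` converge uniformly on compact subsets
of `[0,a)` to a continuous curve `γ : [0,a) → B` with `γ(0) = x`. -/
theorem stmt7 {X : Type*} [MetricSpace X]
    (γseq : ℕ → ℝ → X) (aseq : ℕ → ℝ) (hpos : ∀ i, 0 < aseq i)
    (hlip : ∀ i, ∀ t₁ ∈ Set.Ico 0 (aseq i), ∀ t₂ ∈ Set.Ico 0 (aseq i),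
      dist (γseq i t₁) (γseq i t₂) ≤ |t₁ - t₂|)
    (x : X) (hx : Filter.Tendsto (fun i => γseq i 0) Filter.atTop (nhds x))
    (B : Set X) (hB : IsCompact B)
    (N : ℕ) (hmem : ∀ i ≥ N, ∀ t ∈ Set.Ico 0 (aseq i), γseq i t ∈ B)
    (a : ℝ) (ha : a = Filter.limsup aseq Filter.atTop) (ha0 : 0 < a)
    (hbdd : Filter.IsBoundedUnder (· ≤ ·) Filter.atTop aseq) :
    ∃ (γ : ℝ → X) (φ : ℕ → ℕ), StrictMono φ ∧
      γ 0 = x ∧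
      ContinuousOn γ (Set.Ico 0 a) ∧
      (∀ t ∈ Set.Ico (0:ℝ) a, γ t ∈ B) ∧
      Filter.Tendsto (fun k => aseq (φ k)) Filter.atTop (nhds a) ∧
      ∀ δ : ℝ, 0 ≤ δ → δ < a →
        TendstoUniformlyOn (fun k t => γseq (φ k) ((aseq (φ k) / a) * t)) γ
          Filter.atTop (Set.Icc 0 δ) := by
  classical
  -- Step 1: extract a subsequence along which `aseq → a`, with indices ≥ N.
  obtain ⟨φ₀, hφ₀mono, hφ₀⟩ : ∃ φ₀ : ℕ → ℕ, StrictMono φ₀ ∧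
      ∀ k, (N ≤ φ₀ k ∧ |aseq (φ₀ k) - a| < 1 / (k + 1)) := by
    apply Filter.extraction_forall_of_frequently
      (P := fun n k => N ≤ k ∧ |aseq k - a| < 1 / (n + 1))
    intro n
    have hεpos : (0:ℝ) < 1 / (n + 1) := by positivity
    have hcob : Filter.IsCoboundedUnder (· ≤ ·) Filter.atTop aseq :=
      Filter.IsBoundedUnder.isCoboundedUnder_le
        ⟨0, Filter.eventually_map.mpr
          (Filter.Eventually.of_forall fun i => (hpos i).le)⟩
    have h1 : ∃ᶠ i in Filter.atTop, a - 1 / (n + 1) < aseq i := by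
      apply Filter.frequently_lt_of_lt_limsup hcob
      rw [← ha]; linarith
    have h2 : ∀ᶠ i in Filter.atTop, aseq i < a + 1 / (n + 1) := by
      apply Filter.eventually_lt_of_limsup_lt _ hbdd
      rw [← ha]; linarith
    have h3 : ∀ᶠ i in Filter.atTop, N ≤ i := Filter.eventually_ge_atTop N
    refine (h1.and_eventually (h2.and h3)).mono fun i hi => ⟨hi.2.2, ?_⟩
    rw [abs_sub_lt_iff]
    constructor <;> [linarith [hi.2.1]; linarith [hi.1]]
  have haφ : Filter.Tendsto (fun k => aseq (φ₀ k)) Filter.atTop (nhds a) := by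
    rw [tendsto_iff_dist_tendsto_zero]
    apply squeeze_zero (fun k => dist_nonneg) (fun k => ?_)
      tendsto_one_div_add_atTop_nhds_zero_nat
    exact le_of_lt (by simpa [Real.dist_eq] using (hφ₀ k).2)
  -- bound on aseq along the subsequence
  have hub : ∀ k, aseq (φ₀ k) ≤ a + 1 := by
    intro k
    have := (abs_sub_lt_iff.mp (hφ₀ k).2).1
    have h1 : (1:ℝ) / (k + 1) ≤ 1 := by
      rw [div_le_one (by positivity)]; linarith [Nat.cast_nonneg (α := ℝ) k]
    linarith
  -- setup
  set K := Set.Icc (0:ℝ) a with hK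
  haveI : CompactSpace K := isCompact_iff_compactSpace.mp isCompact_Icc
  set M : NNReal := Real.toNNReal ((a + 1) / a) with hM
  have hMcoe : (M : ℝ) = (a + 1) / a := Real.coe_toNNReal _ (by positivity)
  set δ' : ℕ → ℝ := fun k => a - a / (k + 2) with hδ'
  have hδ'nonneg : ∀ k, 0 ≤ δ' k := by
    intro k
    have h1 : a / ((k:ℝ) + 2) ≤ a := by
      rw [div_le_iff₀ (by positivity)]
      nlinarith [ha0.le, Nat.cast_nonneg (α := ℝ) k]
    simp only [hδ']; linarith
  have hδ'lt : ∀ k, δ' k < a := by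
    intro k
    have : 0 < a / (k + 2) := by positivity
    simp only [hδ']; linarith
  have hδ'mono : Monotone δ' := by
    intro j k hjk
    have : a / (k + 2) ≤ a / (j + 2) := by
      apply div_le_div_of_nonneg_left ha0.le (by positivity)
      have : (j:ℝ) ≤ k := Nat.cast_le.mpr hjk
      linarith
    simp only [hδ']; linarith
  have hδ'tendsto : Filter.Tendsto δ' Filter.atTop (nhds a) := by
    have h2 : Filter.Tendsto (fun k : ℕ => a / ((k:ℝ) + 2)) Filter.atTop (nhds 0) := by
      have h3 := Filter.Tendsto.comp (tendsto_const_div_atTop_nhds_zero_nat a)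
        (Filter.tendsto_add_atTop_nat 2)
      refine h3.congr fun k => ?_
      simp only [Function.comp_apply]
      push_cast
      ring_nf
    have := (tendsto_const_nhds (x := a) (f := Filter.atTop (α := ℕ))).sub h2
    simpa using this
  -- the reparametrised truncated curves, as Lipschitz maps K → X
  have key : ∀ k, ∀ t : K,
      (aseq (φ₀ k) / a) * min t.1 (δ' k) ∈ Set.Ico 0 (aseq (φ₀ k)) := by
    intro k t
    have ht0 : (0:ℝ) ≤ t.1 := t.2.1
    have hc : 0 < aseq (φ₀ k) / a := div_pos (hpos _) ha0
    constructor
    · exact mul_nonneg hc.le (le_min ht0 (hδ'nonneg k))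
    · have h1 : min t.1 (δ' k) ≤ δ' k := min_le_right _ _
      have : (aseq (φ₀ k) / a) * min t.1 (δ' k) ≤ (aseq (φ₀ k) / a) * δ' k :=
        mul_le_mul_of_nonneg_left h1 hc.le
      have h2 : (aseq (φ₀ k) / a) * δ' k < (aseq (φ₀ k) / a) * a :=
        mul_lt_mul_of_pos_left (hδ'lt k) hc
      have h3 : (aseq (φ₀ k) / a) * a = aseq (φ₀ k) := by
        field_simp
      linarith
  have hlipk : ∀ k, LipschitzWith M
      (fun t : K => γseq (φ₀ k) ((aseq (φ₀ k) / a) * min t.1 (δ' k))) := by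
    intro k
    apply LipschitzWith.of_dist_le_mul
    intro s t
    have hc : 0 ≤ aseq (φ₀ k) / a := (div_pos (hpos _) ha0).le
    calc dist (γseq (φ₀ k) ((aseq (φ₀ k) / a) * min s.1 (δ' k)))
          (γseq (φ₀ k) ((aseq (φ₀ k) / a) * min t.1 (δ' k)))
        ≤ |(aseq (φ₀ k) / a) * min s.1 (δ' k) - (aseq (φ₀ k) / a) * min t.1 (δ' k)| :=
          hlip _ _ (key k s) _ (key k t)
      _ = (aseq (φ₀ k) / a) * |min s.1 (δ' k) - min t.1 (δ' k)| := by
          rw [← mul_sub, abs_mul, abs_of_nonneg hc]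
      _ ≤ (aseq (φ₀ k) / a) * |s.1 - t.1| := by
          apply mul_le_mul_of_nonneg_left _ hc
          have := abs_min_sub_min_le_max s.1 (δ' k) t.1 (δ' k)
          simpa using this.trans (by simp [abs_nonneg])
      _ ≤ M * dist s t := by
          rw [hMcoe, Subtype.dist_eq, Real.dist_eq]
          apply mul_le_mul_of_nonneg_right _ (abs_nonneg _)
          rw [div_le_div_iff_of_pos_right ha0]
          exact hub k
  set h : ℕ → C(K, X) := fun k =>
    ⟨fun t => γseq (φ₀ k) ((aseq (φ₀ k) / a) * min t.1 (δ' k)), (hlipk k).continuous⟩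
    with hh
  -- the compact set of candidate limits
  set S : Set C(K, X) := {f | LipschitzWith M f ∧ ∀ t, f t ∈ B} with hS
  have hScompact : IsCompact S := by
    apply ArzelaAscoli.isCompact_of_equicontinuous
    · have himg : ContinuousMap.toFun '' S
          = {g : K → X | LipschitzWith M g ∧ ∀ t, g t ∈ B} := by
        ext g
        constructor
        · rintro ⟨f, hf, rfl⟩; exact hf
        · rintro ⟨hg1, hg2⟩
          exact ⟨⟨g, hg1.continuous⟩, ⟨hg1, hg2⟩, rfl⟩
      rw [himg]
      apply IsCompact.of_isClosed_subset (isCompact_univ_pi fun _ : K => hB)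
      · have : {g : K → X | LipschitzWith M g ∧ ∀ t, g t ∈ B}
            = {g : K → X | LipschitzWith M g} ∩ Set.univ.pi (fun _ : K => B) := by
          ext g; simp [Set.mem_pi]
        rw [this]
        exact (isClosed_setOf_lipschitzWith M).inter
          (isClosed_set_pi fun i _ => hB.isClosed)
      · rintro g ⟨-, hg2⟩
        exact Set.mem_univ_pi.mpr hg2
    · apply Metric.equicontinuous_of_continuity_modulus (fun r => M * r)
      · have : Filter.Tendsto (fun r : ℝ => (M:ℝ) * r) (nhds 0) (nhds ((M:ℝ) * 0)) :=
          (continuous_const.mul continuous_id).tendsto 0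
        simpa using this
      · exact fun s t f => f.2.1.dist_le_mul s t
  have hmemS : ∀ k, h k ∈ S := by
    intro k
    refine ⟨hlipk k, fun t => ?_⟩
    exact hmem (φ₀ k) (hφ₀ k).1 _ (key k t)
  obtain ⟨γ', hγ'S, ψ, hψmono, hψtendsto⟩ := hScompact.tendsto_subseq hmemS
  have huc : TendstoUniformly (fun j (t : K) => (h (ψ j)) t) (fun t => γ' t)
      Filter.atTop := ContinuousMap.tendsto_iff_tendstoUniformly.mp hψtendsto
  -- the limit curve
  refine ⟨fun t => γ' (Set.projIcc 0 a ha0.le t), φ₀ ∘ ψ, hφ₀mono.comp hψmono, ?_, ?_, ?_, ?_, ?_⟩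
  · -- γ 0 = x
    have h0K : (0:ℝ) ∈ K := ⟨le_refl 0, ha0.le⟩
    have hA : Filter.Tendsto (fun j => (h (ψ j)) ⟨0, h0K⟩) Filter.atTop
        (nhds (γ' ⟨0, h0K⟩)) := huc.tendsto_at _
    have hB' : Filter.Tendsto (fun j => (h (ψ j)) ⟨0, h0K⟩) Filter.atTop (nhds x) := by
      have heq : ∀ j, (h (ψ j)) ⟨0, h0K⟩ = γseq (φ₀ (ψ j)) 0 := by
        intro j
        simp only [hh, ContinuousMap.coe_mk]
        rw [min_eq_left (hδ'nonneg _), mul_zero]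
      simp only [heq]
      exact hx.comp ((hφ₀mono.comp hψmono).tendsto_atTop)
    have huniq := tendsto_nhds_unique hA hB'
    show γ' (Set.projIcc 0 a ha0.le 0) = x
    rw [Set.projIcc_of_mem ha0.le h0K]
    exact huniq
  · -- continuity
    exact (γ'.continuous.comp continuous_projIcc).continuousOn
  · -- values in B
    exact fun t ht => hγ'S.2 _
  · -- aseq (φ k) → a
    exact haφ.comp hψmono.tendsto_atTop
  · -- uniform convergence on [0, δ]
    intro δ hδ0 hδa
    rw [Metric.tendstoUniformlyOn_iff]
    intro ε hε
    have hconv := Metric.tendstoUniformly_iff.mp huc ε hε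
    have hδev : ∀ᶠ j in Filter.atTop, δ ≤ δ' (ψ j) := by
      have : ∀ᶠ j in Filter.atTop, δ ≤ δ' j :=
        hδ'tendsto.eventually_const_le hδa
      exact this.mono fun j hj => hj.trans (hδ'mono (hψmono.le_apply))
    filter_upwards [hconv, hδev] with j hj hδj
    intro t ht
    have htK : t ∈ K := ⟨ht.1, ht.2.trans hδa.le⟩
    have heq : (h (ψ j)) ⟨t, htK⟩ = γseq (φ₀ (ψ j)) ((aseq (φ₀ (ψ j)) / a) * t) := by
      simp only [hh, ContinuousMap.coe_mk]
      rw [min_eq_left (ht.2.trans hδj)]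
    have := hj ⟨t, htK⟩
    rw [heq] at this
    simpa [Set.projIcc_of_mem ha0.le htK] using this
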